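/- A continuous action φ: G × X → X on a compact metric space has the persistent shadowing property if and only if every point of X is a persistent shadowable point, i.e., PSh(φ) = X. -/

import Mathlib

open MeasureTheory

def ContGroupAction (G : Type*) [Group G] (X : Type*) [MetricSpace X] (φ : G → X → X) : Prop :=
  (∀ g : G, Continuous (φ g)) ∧ (∀ g h : G, ∀ x : X, φ (g * h) x = φ g (φ h x)) ∧
    (∀ x : X, φ (1 : G) x = x)

def IsPseudoOrbit {G : Type*} [Group G] {X : Type*} [MetricSpace X]
    (S : Set G) (ψ : G → X → X) (δ : ℝ) (f : G → X) : Prop :=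
  ∀ s ∈ S, ∀ g : G, dist (f (s * g)) (ψ s (f g)) < δ

def CloseActions {G : Type*} [Group G] {X : Type*} [MetricSpace X]
    (S : Set G) (φ ψ : G → X → X) (δ : ℝ) : Prop :=
  ∀ s ∈ S, ∀ x : X, dist (φ s x) (ψ s x) < δ

def PersistentShadowing {G : Type*} [Group G] {X : Type*} [MetricSpace X]
    (S : Set G) (φ : G → X → X) : Prop :=
  ∀ ε > (0:ℝ), ∃ δ > (0:ℝ), ∀ ψ : G → X → X, ContGroupAction G X ψ → CloseActions S φ ψ δ →
    ∀ f : G → X, IsPseudoOrbit S ψ δ f → ∃ p : X, ∀ g : G, dist (f g) (ψ g p) < ε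

def Shadowing {G : Type*} [Group G] {X : Type*} [MetricSpace X]
    (S : Set G) (φ : G → X → X) : Prop :=
  ∀ ε > (0:ℝ), ∃ δ > (0:ℝ), ∀ f : G → X, IsPseudoOrbit S φ δ f →
    ∃ p : X, ∀ g : G, dist (f g) (φ g p) < ε

def PShSet {G : Type*} [Group G] {X : Type*} [MetricSpace X]
    (S : Set G) (φ : G → X → X) (δ ε : ℝ) : Set X :=
  {x | ∀ ψ : G → X → X, ContGroupAction G X ψ → CloseActions S φ ψ δ →
    ∀ f : G → X, IsPseudoOrbit S ψ δ f → f 1 = x →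
      ∃ p : X, ∀ g : G, dist (f g) (ψ g p) < ε}

def PShPoint {G : Type*} [Group G] {X : Type*} [MetricSpace X]
    (S : Set G) (φ : G → X → X) (x : X) : Prop :=
  ∀ ε > (0:ℝ), ∃ δ > (0:ℝ), x ∈ PShSet S φ δ ε

def ShPoint {G : Type*} [Group G] {X : Type*} [MetricSpace X]
    (S : Set G) (φ : G → X → X) (x : X) : Prop :=
  ∀ ε > (0:ℝ), ∃ δ > (0:ℝ), ∀ f : G → X, IsPseudoOrbit S φ δ f → f 1 = x →
    ∃ p : X, ∀ g : G, dist (f g) (φ g p) < ε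

def UPersisBetaPoint {G : Type*} [Group G] {X : Type*} [MetricSpace X]
    (S : Set G) (φ : G → X → X) (x : X) : Prop :=
  ∀ ε > (0:ℝ), ∃ δ > (0:ℝ), ∀ ψ : G → X → X, ContGroupAction G X ψ → CloseActions S φ ψ δ →
    ∀ x' : X, dist x' x < δ → ∃ y : X, ∀ g : G, dist (φ g x') (ψ g y) < ε

def BetaPersistent {G : Type*} [Group G] {X : Type*} [MetricSpace X]
    (S : Set G) (φ : G → X → X) : Prop :=
  ∀ ε > (0:ℝ), ∃ δ > (0:ℝ), ∀ ψ : G → X → X, ContGroupAction G X ψ → CloseActions S φ ψ δ →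
    ∀ x : X, ∃ y : X, ∀ g : G, dist (φ g x) (ψ g y) < ε

def CompatiblePSh {G : Type*} [Group G] {X : Type*} [MetricSpace X] [MeasurableSpace X]
    (S : Set G) (φ : G → X → X) (μ : Measure X) : Prop :=
  ∀ ε > (0:ℝ), ∃ δ > (0:ℝ), ∀ A : Set X, MeasurableSet A → 0 < μ A →
    (A ∩ PShSet S φ δ ε).Nonempty

def MeasSupp {X : Type*} [MetricSpace X] [MeasurableSpace X] (μ : Measure X) : Set X :=
  {x | ∀ U : Set X, IsOpen U → x ∈ U → 0 < μ U}

/-!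
Shadowing a pseudo orbit only involves its value at the identity through the condition
`f 1 = x`, and moving `f 1` slightly does not spoil the pseudo-orbit property: since the
generators act continuously, `Function.update f 1 x` is still a pseudo orbit, with a slightly
larger constant, whenever `f 1` is close to `x`. Hence the constant `δ` that works at a
persistent shadowable point works, after shrinking, on a whole neighbourhood of it, and
compactness of `X` turns these local constants into a single one.
-/

open Filter Topology

theorem CompactSpace.exists_pos_forall_mem_of_antitone {X : Type*} [TopologicalSpace X]
    [CompactSpace X] {A : ℝ → Set X} (hA : Antitone A)
    (h : ∀ x, ∃ δ > 0, ∀ᶠ y in 𝓝 x, y ∈ A δ) : ∃ δ > 0, ∀ x, x ∈ A δ := by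
  choose d hd hmem using h
  obtain ⟨t, ht⟩ := CompactSpace.elim_nhds_subcover (fun x => A (d x)) hmem
  have hsmall : ∀ᶠ δ in 𝓝[>] (0 : ℝ), 0 < δ ∧ ∀ i ∈ t, δ ≤ d i :=
    Eventually.and self_mem_nhdsWithin <| t.eventually_all.2 fun i _ =>
      nhdsWithin_le_nhds <| (eventually_lt_nhds (hd i)).mono fun _ => le_of_lt
  obtain ⟨δ, hδ, hle⟩ := hsmall.exists
  refine ⟨δ, hδ, fun x => ?_⟩
  obtain ⟨i, hi, hx⟩ := Set.mem_iUnion₂.1 (ht.ge (Set.mem_univ x))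
  exact hA (hle i hi) hx

section PersistentShadowing

variable {G : Type*} [Group G] {X : Type*} [MetricSpace X] {S : Set G} {φ ψ : G → X → X}

theorem IsPseudoOrbit.mono {δ δ' : ℝ} {f : G → X} (hf : IsPseudoOrbit S ψ δ f) (h : δ ≤ δ') :
    IsPseudoOrbit S ψ δ' f :=
  fun s hs g => (hf s hs g).trans_le h

theorem CloseActions.mono {δ δ' : ℝ} (hc : CloseActions S φ ψ δ) (h : δ ≤ δ') :
    CloseActions S φ ψ δ' :=
  fun s hs x => (hc s hs x).trans_le h

theorem pShSet_antitone (S : Set G) (φ : G → X → X) (ε : ℝ) :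
    Antitone fun δ => PShSet S φ δ ε := by
  intro _ _ h _ hx ψ hψ hc f hf hf1
  exact hx ψ hψ (hc.mono h) f (hf.mono h) hf1

theorem persistentShadowing_iff_forall_mem_pShSet :
    PersistentShadowing S φ ↔ ∀ ε > (0 : ℝ), ∃ δ > (0 : ℝ), ∀ x, x ∈ PShSet S φ δ ε := by
  constructor
  · intro h ε hε
    obtain ⟨δ, hδ, H⟩ := h ε hε
    exact ⟨δ, hδ, fun x ψ hψ hc f hf _ => H ψ hψ hc f hf⟩
  · intro h ε hε
    obtain ⟨δ, hδ, H⟩ := h ε hε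
    exact ⟨δ, hδ, fun ψ hψ hc f hf => H (f 1) ψ hψ hc f hf rfl⟩

theorem IsPseudoOrbit.update_one [DecidableEq G] {δ c : ℝ} {f : G → X} {x : X}
    (hψ : ∀ y, ψ 1 y = y) (hf : IsPseudoOrbit S ψ δ f) (hclose : CloseActions S φ ψ δ)
    (hx : ∀ s ∈ S, dist (φ s (f 1)) (φ s x) < c) :
    IsPseudoOrbit S ψ (3 * δ + c + dist (f 1) x) (Function.update f 1 x) := by
  intro s hs g
  have hδ : 0 < δ := dist_nonneg.trans_lt (hf s hs 1)
  have hc : 0 < c := dist_nonneg.trans_lt (hx s hs)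
  have hfx : 0 ≤ dist (f 1) x := dist_nonneg
  rcases eq_or_ne g 1 with rfl | hg
  · rw [mul_one, Function.update_self]
    rcases eq_or_ne s 1 with rfl | hs1
    · rw [Function.update_self, hψ, dist_self]
      positivity
    · rw [Function.update_of_ne hs1]
      have h₁ := hf s hs 1
      have h₂ := hclose s hs (f 1)
      have h₃ := hclose s hs x
      rw [mul_one] at h₁
      rw [dist_comm] at h₂
      calc dist (f s) (ψ s x) ≤ dist (f s) (φ s x) + dist (φ s x) (ψ s x) := dist_triangle _ _ _
        _ ≤ dist (f s) (ψ s (f 1)) + dist (ψ s (f 1)) (φ s (f 1)) + dist (φ s (f 1)) (φ s x)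
            + dist (φ s x) (ψ s x) := by gcongr; exact dist_triangle4 _ _ _ _
        _ < δ + δ + c + δ := by gcongr; exact hx s hs
        _ ≤ 3 * δ + c + dist (f 1) x := by linarith
  · rw [Function.update_of_ne hg]
    rcases eq_or_ne (s * g) 1 with hsg | hsg
    · rw [hsg, Function.update_self]
      have h₁ := hf s hs g
      rw [hsg] at h₁
      calc dist x (ψ s (f g)) ≤ dist x (f 1) + dist (f 1) (ψ s (f g)) := dist_triangle _ _ _
        _ < 3 * δ + c + dist (f 1) x := by rw [dist_comm x]; linarith
    · rw [Function.update_of_ne hsg]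
      linarith [hf s hs g]

theorem PShPoint.eventually_mem_pShSet {x : X} (hx : PShPoint S φ x) (hS : S.Finite)
    (hφ : ∀ s ∈ S, ContinuousAt (φ s) x) :
    ∀ ε > (0 : ℝ), ∃ δ > (0 : ℝ), ∀ᶠ y in 𝓝 x, y ∈ PShSet S φ δ ε := by
  classical
  intro ε hε
  obtain ⟨d, hd, hxd⟩ := hx (ε / 2) (half_pos hε)
  set η := min (d / 4) (ε / 2)
  have hη : 0 < η := by positivity
  have hnear : ∀ᶠ y in 𝓝 x, dist y x < η ∧ ∀ s ∈ S, dist (φ s y) (φ s x) < d / 4 :=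
    Eventually.and (Metric.ball_mem_nhds x hη) <| (eventually_all_finite hS).2 fun s hs =>
      (hφ s hs).eventually (Metric.ball_mem_nhds _ (by positivity))
  refine ⟨d / 6, by positivity, hnear.mono ?_⟩
  rintro _ ⟨hyx, hφy⟩ ψ hψ hclose f hf rfl
  have hf' : IsPseudoOrbit S ψ d (Function.update f 1 x) :=
    (hf.update_one hψ.2.2 hclose hφy).mono (by linarith [min_le_left (d / 4) (ε / 2)])
  obtain ⟨p, hp⟩ := hxd ψ hψ (hclose.mono (by linarith)) _ hf' (Function.update_self ..)
  refine ⟨p, fun g => ?_⟩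
  have hmoved : dist (f g) (Function.update f 1 x g) < η := by
    rcases eq_or_ne g 1 with rfl | hg
    · rwa [Function.update_self]
    · rwa [Function.update_of_ne hg, dist_self]
  calc dist (f g) (ψ g p)
        ≤ dist (f g) (Function.update f 1 x g) + dist (Function.update f 1 x g) (ψ g p) :=
          dist_triangle _ _ _
    _ < η + ε / 2 := add_lt_add hmoved (hp g)
    _ ≤ ε := by linarith [min_le_right (d / 4) (ε / 2)]

end PersistentShadowing

theorem stmt13_general {G : Type*} [Group G] {X : Type*} [MetricSpace X] [CompactSpace X]
    (S : Set G) (hSfin : S.Finite)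
    (φ : G → X → X) (hφ : ContGroupAction G X φ) :
    PersistentShadowing S φ ↔ ∀ x : X, PShPoint S φ x := by
  rw [persistentShadowing_iff_forall_mem_pShSet]
  constructor
  · intro h x ε hε
    obtain ⟨δ, hδ, hall⟩ := h ε hε
    exact ⟨δ, hδ, hall x⟩
  · intro h ε hε
    exact CompactSpace.exists_pos_forall_mem_of_antitone (pShSet_antitone S φ ε) fun x =>
      (h x).eventually_mem_pShSet hSfin (fun s _ => (hφ.1 s).continuousAt) ε hε

theorem stmt13 {G : Type*} [Group G] {X : Type*} [MetricSpace X] [CompactSpace X]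
    (S : Set G) (hSfin : S.Finite) (hSsym : ∀ s ∈ S, s⁻¹ ∈ S)
    (hSgen : Subgroup.closure S = ⊤)
    (φ : G → X → X) (hφ : ContGroupAction G X φ) :
    PersistentShadowing S φ ↔ ∀ x : X, PShPoint S φ x :=
  stmt13_general S hSfin φ hφ
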